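/- Let H be a complex Hilbert space, let δ > 0, and let A₁ and A₂ be nonzero norm-closed C*-subalgebras of B(H) with d_KK(A₁, A₂) < δ/4. Then there exists a map φ : A₁ → A₂ which is a δ-*-isomorphism and which moreover satisfies ‖φ(x)‖ = ‖x‖ and ‖φ(x) − x‖ ≤ (δ/4)·‖x‖ for every x ∈ A₁. -/

import Mathlib

/-! Normalise `x ∈ A₁`, take a unit of `A₂` within `δ/4` of it and rescale: the result `φ x` has
norm `‖x‖` and lies within `(δ/4)‖x‖` of `x`. A norm-preserving map that moves each `x` by at most
`(δ/4)‖x‖` is a `δ`-*-isomorphism, because on the unit ball every defect (of additivity,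
multiplicativity, ...) is a combination of at most three such displacements of total size at
most `δ`; `δ`-surjectivity comes from the other half of `d_KK`. The unit spheres involved are
nonempty because both algebras contain the identity. -/

/-- `φ : A → B` (not assumed linear or continuous) is an `ε`-*-homomorphism. -/
def IsApproxStarHom {A B : Type*}
    [NonUnitalNormedRing A] [StarRing A] [Module ℂ A]
    [NonUnitalNormedRing B] [StarRing B] [Module ℂ B]
    (ε : ℝ) (φ : A → B) : Prop :=
  (∀ x y : A, ‖x‖ ≤ 1 → ‖y‖ ≤ 1 → ‖φ (x + y) - φ x - φ y‖ ≤ ε) ∧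
  (∀ (x : A) (l : ℂ), ‖x‖ ≤ 1 → ‖l‖ ≤ 1 → ‖φ (l • x) - l • φ x‖ ≤ ε) ∧
  (∀ x y : A, ‖x‖ ≤ 1 → ‖y‖ ≤ 1 → ‖φ (x * y) - φ x * φ y‖ ≤ ε) ∧
  (∀ x : A, ‖x‖ ≤ 1 → ‖φ (star x) - star (φ x)‖ ≤ ε) ∧
  (∀ x : A, ‖x‖ ≤ 1 → ‖φ x‖ ≤ 1 + ε)

/-- An `ε`-*-isomorphism: an `ε`-isometric, `ε`-surjective `ε`-*-homomorphism. -/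
def IsApproxStarIso {A B : Type*}
    [NonUnitalNormedRing A] [StarRing A] [Module ℂ A]
    [NonUnitalNormedRing B] [StarRing B] [Module ℂ B]
    (ε : ℝ) (φ : A → B) : Prop :=
  IsApproxStarHom ε φ ∧
  (∀ x : A, ‖x‖ = 1 → ‖φ x‖ ∈ Set.Icc (1 - ε) (1 + ε)) ∧
  (∀ b : B, ‖b‖ ≤ 1 → ∃ a : A, ‖φ a - b‖ ≤ ε)


/-- The Kadison–Kastler distance between two subsets of `B(H)`. -/
noncomputable def dKK {H : Type*} [NormedAddCommGroup H] [InnerProductSpace ℂ H]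
    [CompleteSpace H] (A B : Set (H →L[ℂ] H)) : ℝ :=
  max
    (⨆ x : {x : H →L[ℂ] H // x ∈ A ∧ ‖x‖ = 1},
      ⨅ y : {y : H →L[ℂ] H // y ∈ B ∧ ‖y‖ = 1}, ‖(x : H →L[ℂ] H) - (y : H →L[ℂ] H)‖)
    (⨆ y : {y : H →L[ℂ] H // y ∈ B ∧ ‖y‖ = 1},
      ⨅ x : {x : H →L[ℂ] H // x ∈ A ∧ ‖x‖ = 1}, ‖(x : H →L[ℂ] H) - (y : H →L[ℂ] H)‖)

universe u

section NearIsometry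

variable {E : Type*} [NormedRing E] [StarRing E] [NormedStarGroup E] [NormedAlgebra ℂ E]
  [StarModule ℂ E] {A B : StarSubalgebra ℂ E} {q : ℝ} {φ : A → B}

theorem isApproxStarHom_of_norm_sub_le (hq : 0 ≤ q) (hnorm : ∀ x, ‖φ x‖ = ‖x‖)
    (hclose : ∀ x, ‖(φ x : E) - x‖ ≤ q * ‖x‖) : IsApproxStarHom (4 * q) φ := by
  have hle : ∀ x r, ‖x‖ ≤ r → ‖(φ x : E) - x‖ ≤ q * r := fun x r hx =>
    (hclose x).trans (mul_le_mul_of_nonneg_left hx hq)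
  refine ⟨fun x y hx hy => ?_, fun x l hx hl => ?_, fun x y hx hy => ?_, fun x hx => ?_,
    fun x hx => ?_⟩
  · have hxy : ‖x + y‖ ≤ 2 := (norm_add_le x y).trans (by linarith)
    calc ‖((φ (x + y) - φ x - φ y : B) : E)‖
        = ‖((φ (x + y) : E) - ↑(x + y)) - ((φ x : E) - x) - ((φ y : E) - y)‖ := by
          push_cast; congr 1; abel
      _ ≤ q * 2 + q * 1 + q * 1 :=
          (norm_sub_le _ _).trans <| add_le_add
            ((norm_sub_le _ _).trans (add_le_add (hle _ _ hxy) (hle x 1 hx))) (hle y 1 hy)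
      _ = 4 * q := by ring
  · have hlx : ‖l • x‖ ≤ 1 := by rw [norm_smul]; exact mul_le_one₀ hl (norm_nonneg _) hx
    calc ‖((φ (l • x) - l • φ x : B) : E)‖
        = ‖((φ (l • x) : E) - ↑(l • x)) - l • ((φ x : E) - x)‖ := by
          push_cast; rw [smul_sub]; congr 1; abel
      _ ≤ q * 1 + 1 * (q * 1) := by
          refine (norm_sub_le _ _).trans (add_le_add (hle _ _ hlx) ?_)
          rw [norm_smul]
          exact mul_le_mul hl (hle x 1 hx) (norm_nonneg _) zero_le_one
      _ ≤ 4 * q := by linarith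
  · have hxy : ‖x * y‖ ≤ 1 := (norm_mul_le x y).trans (mul_le_one₀ hx (norm_nonneg _) hy)
    have hφx : ‖(φ x : E)‖ ≤ 1 := (hnorm x).trans_le hx
    calc ‖((φ (x * y) - φ x * φ y : B) : E)‖
        = ‖((φ (x * y) : E) - ↑(x * y)) - ((φ x : E) - x) * y - (φ x : E) * ((φ y : E) - y)‖ := by
          push_cast; rw [sub_mul, mul_sub]; congr 1; abel
      _ ≤ q * 1 + q * 1 * 1 + 1 * (q * 1) := by
          refine (norm_sub_le _ _).trans (add_le_add ((norm_sub_le _ _).trans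
            (add_le_add (hle _ _ hxy) ((norm_mul_le _ _).trans ?_))) ((norm_mul_le _ _).trans ?_))
          · exact mul_le_mul (hle x 1 hx) hy (norm_nonneg _) (by positivity)
          · exact mul_le_mul hφx (hle y 1 hy) (norm_nonneg _) zero_le_one
      _ ≤ 4 * q := by linarith
  · have hsx : ‖star x‖ ≤ 1 := (norm_star (x : E)).trans_le hx
    calc ‖((φ (star x) - star (φ x) : B) : E)‖
        = ‖((φ (star x) : E) - ↑(star x)) - star ((φ x : E) - x)‖ := by
          simp only [AddSubgroupClass.coe_sub, StarMemClass.coe_star, star_sub]; congr 1; abel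
      _ ≤ q * 1 + q * 1 :=
          (norm_sub_le _ _).trans (add_le_add (hle _ _ hsx) ((norm_star _).trans_le (hle x 1 hx)))
      _ ≤ 4 * q := by linarith
  · rw [hnorm]
    linarith

theorem isApproxStarIso_of_norm_sub_le (hq : 0 ≤ q) (hnorm : ∀ x, ‖φ x‖ = ‖x‖)
    (hclose : ∀ x, ‖(φ x : E) - x‖ ≤ q * ‖x‖)
    (hsurj : ∀ b ∈ B, ∃ a ∈ A, ‖a‖ = ‖b‖ ∧ ‖a - b‖ ≤ q * ‖b‖) :
    IsApproxStarIso (4 * q) φ := by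
  refine ⟨isApproxStarHom_of_norm_sub_le hq hnorm hclose, fun x hx => ?_, fun b hb => ?_⟩
  · rw [hnorm, hx]
    constructor <;> linarith
  · obtain ⟨a, ha, hab, hclose'⟩ := hsurj b b.2
    refine ⟨⟨a, ha⟩, ?_⟩
    calc ‖((φ ⟨a, ha⟩ - b : B) : E)‖ = ‖((φ ⟨a, ha⟩ : E) - a) + (a - b)‖ := by
          push_cast; congr 1; abel
      _ ≤ q * ‖b‖ + q * ‖b‖ := (norm_add_le _ _).trans (add_le_add (hab ▸ hclose _) hclose')
      _ ≤ 4 * q := by nlinarith [norm_nonneg b]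

end NearIsometry

theorem exists_mem_norm_eq_norm_sub_le {E : Type*} [NormedAddCommGroup E] [NormedSpace ℂ E]
    {S : Type*} [SetLike S E] [SMulMemClass S ℂ E] [ZeroMemClass S E] {A B : S} {q : ℝ}
    (hAB : ∀ x ∈ A, ‖x‖ = 1 → ∃ y ∈ B, ‖y‖ = 1 ∧ ‖x - y‖ < q) {x : E} (hx : x ∈ A) :
    ∃ y ∈ B, ‖y‖ = ‖x‖ ∧ ‖y - x‖ ≤ q * ‖x‖ := by
  rcases eq_or_ne x 0 with rfl | hx0
  · exact ⟨0, zero_mem B, by simp, by simp⟩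
  have hpos : 0 < ‖x‖ := norm_pos_iff.mpr hx0
  set c : ℂ := (‖x‖ : ℂ)
  have hc : ‖c‖ = ‖x‖ := by simp [c]
  have hcx : c • c⁻¹ • x = x := smul_inv_smul₀ (by simpa [c] using hpos.ne') x
  obtain ⟨y, hyB, hy1, hxy⟩ := hAB (c⁻¹ • x) (SMulMemClass.smul_mem _ hx)
    (by rw [norm_smul, norm_inv, hc, inv_mul_cancel₀ hpos.ne'])
  refine ⟨c • y, SMulMemClass.smul_mem _ hyB, by rw [norm_smul, hy1, hc, mul_one], ?_⟩
  calc ‖c • y - x‖ = ‖x‖ * ‖c⁻¹ • x - y‖ := by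
        rw [← hc, ← norm_smul, norm_sub_rev, smul_sub, hcx]
    _ ≤ q * ‖x‖ := by rw [mul_comm]; exact mul_le_mul_of_nonneg_right hxy.le hpos.le

theorem exists_mem_norm_eq_one {H : Type*} [NormedAddCommGroup H] [NormedSpace ℂ H]
    {S : Type*} [SetLike S (H →L[ℂ] H)] [OneMemClass S (H →L[ℂ] H)]
    (A : S) {x : H →L[ℂ] H} (hx : ‖x‖ = 1) : ∃ y ∈ A, ‖y‖ = 1 := by
  obtain ⟨v, hv⟩ := DFunLike.ne_iff.mp (norm_ne_zero_iff.mp (hx ▸ one_ne_zero))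
  have : Nontrivial H := nontrivial_of_ne _ _ hv
  exact ⟨1, one_mem A, norm_one⟩

section KadisonKastler

variable {H : Type*} [NormedAddCommGroup H] [InnerProductSpace ℂ H] [CompleteSpace H]

theorem dKK_comm (A B : Set (H →L[ℂ] H)) : dKK A B = dKK B A := by
  unfold dKK
  rw [max_comm]
  simp only [norm_sub_rev]

theorem exists_mem_norm_eq_one_norm_sub_lt_of_dKK_lt {A B : Set (H →L[ℂ] H)} {q : ℝ}
    (hB : ∃ y ∈ B, ‖y‖ = 1) (h : dKK A B < q) {x : H →L[ℂ] H} (hxA : x ∈ A) (hx : ‖x‖ = 1) :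
    ∃ y ∈ B, ‖y‖ = 1 ∧ ‖x - y‖ < q := by
  obtain ⟨y₀, hy₀B, hy₀⟩ := hB
  have : Nonempty {y // y ∈ B ∧ ‖y‖ = 1} := ⟨⟨y₀, hy₀B, hy₀⟩⟩
  have hinf_le : ∀ x' : H →L[ℂ] H, ‖x'‖ = 1 →
      ⨅ y : {y // y ∈ B ∧ ‖y‖ = 1}, ‖x' - y‖ ≤ 2 := fun x' hx' =>
    ciInf_le_of_le ⟨0, by rintro _ ⟨y, rfl⟩; positivity⟩ ⟨y₀, hy₀B, hy₀⟩
      ((norm_sub_le _ _).trans_eq (by rw [hx', hy₀]; norm_num))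
  have hlt : ⨅ y : {y // y ∈ B ∧ ‖y‖ = 1}, ‖x - y‖ < q :=
    (le_ciSup (f := fun x' : {x // x ∈ A ∧ ‖x‖ = 1} =>
        ⨅ y : {y // y ∈ B ∧ ‖y‖ = 1}, ‖(x' : H →L[ℂ] H) - y‖)
      ⟨2, by rintro _ ⟨x', rfl⟩; exact hinf_le x' x'.2.2⟩ ⟨x, hxA, hx⟩).trans_lt
      ((le_max_left _ _).trans_lt h)
  obtain ⟨y, hy⟩ := exists_lt_of_ciInf_lt hlt
  exact ⟨y, y.2.1, y.2.2, hy⟩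

end KadisonKastler

theorem close_subalgebras_approx_iso_general {H : Type u}
    [NormedAddCommGroup H] [InnerProductSpace ℂ H] [CompleteSpace H]
    (δ : ℝ) (hδ : 0 < δ) (A₁ A₂ : StarSubalgebra ℂ (H →L[ℂ] H))
    (hKK : dKK (A₁ : Set (H →L[ℂ] H)) (A₂ : Set (H →L[ℂ] H)) < δ / 4) :
    ∃ φ : A₁ → A₂, IsApproxStarIso δ φ ∧
      ∀ x : A₁, ‖(φ x : H →L[ℂ] H)‖ = ‖(x : H →L[ℂ] H)‖ ∧
        ‖(φ x : H →L[ℂ] H) - (x : H →L[ℂ] H)‖ ≤ (δ / 4) * ‖(x : H →L[ℂ] H)‖ := by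
  have near : ∀ {A B : StarSubalgebra ℂ (H →L[ℂ] H)}, dKK (A : Set (H →L[ℂ] H)) B < δ / 4 →
      ∀ x ∈ A, ∃ y ∈ B, ‖y‖ = ‖x‖ ∧ ‖y - x‖ ≤ δ / 4 * ‖x‖ := fun {_ B} hAB _ hx =>
    exists_mem_norm_eq_norm_sub_le (fun _ hx hx1 => exists_mem_norm_eq_one_norm_sub_lt_of_dKK_lt
      (exists_mem_norm_eq_one B hx1) hAB hx hx1) hx
  choose φ hφ using fun x : A₁ => near hKK x x.2
  have hδ4 : 0 ≤ δ / 4 := by positivity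
  have hiso := isApproxStarIso_of_norm_sub_le (φ := fun x => ⟨φ x, (hφ x).1⟩) hδ4
    (fun x => (hφ x).2.1) (fun x => (hφ x).2.2) (near (dKK_comm (H := H) A₁ A₂ ▸ hKK))
  rw [mul_div_cancel₀ δ four_ne_zero] at hiso
  exact ⟨_, hiso, fun x => (hφ x).2⟩

/-- If two nonzero norm-closed C*-subalgebras of `B(H)` are at Kadison–Kastler
distance less than `δ/4`, then there is a `δ`-*-isomorphism `φ : A₁ → A₂` with
`‖φ(x)‖ = ‖x‖` and `‖φ(x) - x‖ ≤ (δ/4)‖x‖` for all `x ∈ A₁`. -/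
theorem close_subalgebras_approx_iso {H : Type u}
    [NormedAddCommGroup H] [InnerProductSpace ℂ H] [CompleteSpace H]
    (δ : ℝ) (hδ : 0 < δ) (A₁ A₂ : StarSubalgebra ℂ (H →L[ℂ] H))
    (h₁ : IsClosed (A₁ : Set (H →L[ℂ] H))) (h₂ : IsClosed (A₂ : Set (H →L[ℂ] H)))
    (hne₁ : ∃ x ∈ A₁, x ≠ 0) (hne₂ : ∃ x ∈ A₂, x ≠ 0)
    (hKK : dKK (A₁ : Set (H →L[ℂ] H)) (A₂ : Set (H →L[ℂ] H)) < δ / 4) :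
    ∃ φ : A₁ → A₂, IsApproxStarIso δ φ ∧
      ∀ x : A₁, ‖(φ x : H →L[ℂ] H)‖ = ‖(x : H →L[ℂ] H)‖ ∧
        ‖(φ x : H →L[ℂ] H) - (x : H →L[ℂ] H)‖ ≤ (δ / 4) * ‖(x : H →L[ℂ] H)‖ :=
  close_subalgebras_approx_iso_general δ hδ A₁ A₂ hKK
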